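/- Quantitative tail estimate: let n ≥ 3, 1 ≤ m ≤ (n-1)/2 an integer, and let g : ℝⁿ → [0,∞) be measurable with 0 < C₀ := ∫_{ℝⁿ} g(z)/|z|^{n-2} dz < ∞. Then for all sufficiently large |y| (say |y| ≥ R₀ for some R₀ ≥ 3), ∫_{ℝⁿ} g(z)/|y-z|^{n-2m} dz ≥ C₀ / (2^{n-2m+1} |y|^{n-2m} ln|y|). -/

import Mathlib

/-!
Since `g(z)/|z|^{n-2}` is integrable and `{0}` is null, the region `|z| ≥ ε` carries at least
half of `C₀` for some `ε > 0`. With `L = ln|y|` and `K = L^{1/(n-2)}`, once `|y|` is so large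
that `K ≥ max(1, 1/ε)` we have `K|z| ≥ 1` on that region, hence
`|y - z| ≤ |y| + |z| ≤ 2|y| K|z|` and, as `n - 2m ≤ n - 2`,
`|y - z|^{n-2m} ≤ 2^{n-2m} |y|^{n-2m} (K|z|)^{n-2} = 2^{n-2m} |y|^{n-2m} L |z|^{n-2}`.
Integrating `g(z)/|y - z|^{n-2m}` over the region gives the bound.
-/

open MeasureTheory Real Filter Topology

section

variable {E : Type*} [NormedAddCommGroup E]

theorem norm_sub_le_two_mul_norm_mul_mul_norm {y z : E} {K : ℝ} (hy : 1 ≤ ‖y‖) (hK : 1 ≤ K)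
    (hKz : 1 ≤ K * ‖z‖) : ‖y - z‖ ≤ 2 * ‖y‖ * (K * ‖z‖) := by
  have hyK : 1 ≤ ‖y‖ * K := one_le_mul_of_one_le_of_one_le hy hK
  nlinarith [norm_sub_le y z, norm_nonneg z]

theorem norm_sub_rpow_le {y z : E} {p r K : ℝ} (hp : 0 ≤ p) (hpr : p ≤ r) (hy : 1 ≤ ‖y‖)
    (hK : 1 ≤ K) (hKz : 1 ≤ K * ‖z‖) :
    ‖y - z‖ ^ p ≤ 2 ^ p * ‖y‖ ^ p * K ^ r * ‖z‖ ^ r := by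
  have hK0 : 0 ≤ K := zero_le_one.trans hK
  calc ‖y - z‖ ^ p ≤ (2 * ‖y‖ * (K * ‖z‖)) ^ p :=
        rpow_le_rpow (norm_nonneg _) (norm_sub_le_two_mul_norm_mul_mul_norm hy hK hKz) hp
    _ = 2 ^ p * ‖y‖ ^ p * (K * ‖z‖) ^ p := by
        rw [mul_rpow (by positivity) (by positivity), mul_rpow zero_le_two (norm_nonneg _)]
    _ ≤ 2 ^ p * ‖y‖ ^ p * (K * ‖z‖) ^ r := by gcongr
    _ = 2 ^ p * ‖y‖ ^ p * K ^ r * ‖z‖ ^ r := by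
        rw [mul_rpow hK0 (norm_nonneg _)]
        ring

variable [MeasurableSpace E] [OpensMeasurableSpace E] {μ : Measure E}

theorem tendsto_setIntegral_norm_ge_nhdsGT_zero [NullSingletonClass μ] {F : Type*}
    [NormedAddCommGroup F] [NormedSpace ℝ F] {f : E → F} (hf : Integrable f μ) :
    Tendsto (fun ε : ℝ => ∫ z in {z | ε ≤ ‖z‖}, f z ∂μ) (𝓝[>] 0) (𝓝 (∫ z, f z ∂μ)) := by
  have hmeas : ∀ ε : ℝ, MeasurableSet {z : E | ε ≤ ‖z‖} := fun _ =>
    measurableSet_le measurable_const measurable_norm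
  simp_rw [← integral_indicator (hmeas _)]
  refine tendsto_integral_filter_of_dominated_convergence (fun z => ‖f z‖)
    (Eventually.of_forall fun ε => hf.aestronglyMeasurable.indicator (hmeas ε))
    (Eventually.of_forall fun ε => Eventually.of_forall fun z => norm_indicator_le_norm_self _ _)
    hf.norm ?_
  filter_upwards [μ.ae_ne 0] with z hz
  have hpos : 0 < ‖z‖ := norm_pos_iff.mpr hz
  refine tendsto_const_nhds.congr' ?_
  filter_upwards [Ioo_mem_nhdsGT hpos] with ε hε
  exact (Set.indicator_of_mem (show z ∈ {z : E | ε ≤ ‖z‖} from hε.2.le) f).symm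

theorem ofReal_setIntegral_div_le_lintegral_div_norm_sub_rpow [NullSingletonClass μ]
    {g : E → ℝ} (hg : ∀ z, 0 ≤ g z) {ε p r K : ℝ} {y : E} (hp : 0 ≤ p) (hpr : p ≤ r)
    (hy : 1 ≤ ‖y‖) (hK : 1 ≤ K) (hKε : 1 ≤ K * ε)
    (hint : IntegrableOn (fun z => g z / ‖z‖ ^ r) {z | ε ≤ ‖z‖} μ) :
    ENNReal.ofReal ((∫ z in {z | ε ≤ ‖z‖}, g z / ‖z‖ ^ r ∂μ) / (2 ^ p * ‖y‖ ^ p * K ^ r)) ≤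
      ∫⁻ z, ENNReal.ofReal (g z / ‖y - z‖ ^ p) ∂μ := by
  set D := 2 ^ p * ‖y‖ ^ p * K ^ r
  have hmeas : MeasurableSet {z : E | ε ≤ ‖z‖} := measurableSet_le measurable_const measurable_norm
  have hpointwise : ∀ z, ε ≤ ‖z‖ → z ≠ y → g z / ‖z‖ ^ r / D ≤ g z / ‖y - z‖ ^ p := by
    intro z hz hzy
    have hKz : 1 ≤ K * ‖z‖ := hKε.trans (by gcongr)
    have hyz : 0 < ‖y - z‖ := norm_pos_iff.mpr (sub_ne_zero.mpr hzy.symm)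
    rw [div_div]
    refine div_le_div_of_nonneg_left (hg z) (rpow_pos_of_pos hyz p) ?_
    calc ‖y - z‖ ^ p ≤ 2 ^ p * ‖y‖ ^ p * K ^ r * ‖z‖ ^ r := norm_sub_rpow_le hp hpr hy hK hKz
      _ = ‖z‖ ^ r * D := mul_comm _ _
  calc ENNReal.ofReal ((∫ z in {z | ε ≤ ‖z‖}, g z / ‖z‖ ^ r ∂μ) / D)
      = ∫⁻ z in {z | ε ≤ ‖z‖}, ENNReal.ofReal (g z / ‖z‖ ^ r / D) ∂μ := by
        rw [← integral_div, ofReal_integral_eq_lintegral_ofReal (hint.div_const D)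
          (Eventually.of_forall fun z => by positivity [hg z])]
    _ ≤ ∫⁻ z in {z | ε ≤ ‖z‖}, ENNReal.ofReal (g z / ‖y - z‖ ^ p) ∂μ := by
        refine lintegral_mono_ae ?_
        filter_upwards [ae_restrict_mem hmeas, (μ.restrict _).ae_ne y] with z hz hzy
        exact ENNReal.ofReal_le_ofReal (hpointwise z hz hzy)
    _ ≤ ∫⁻ z, ENNReal.ofReal (g z / ‖y - z‖ ^ p) ∂μ := setLIntegral_le_lintegral _ _

end

theorem one_le_log_of_three_le {x : ℝ} (hx : 3 ≤ x) : 1 ≤ log x :=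
  (le_log_iff_exp_le (by linarith)).mpr <| exp_one_lt_d9.le.trans (by linarith)

theorem stmt_17 (n m : ℕ) (hn : 3 ≤ n) (hm1 : 1 ≤ m) (hm2 : 2 * m + 1 ≤ n)
    (g : EuclideanSpace ℝ (Fin n) → ℝ) (hnonneg : ∀ z, 0 ≤ g z)
    (hint : Integrable (fun z : EuclideanSpace ℝ (Fin n) => g z / ‖z‖ ^ ((n : ℝ) - 2)))
    (hpos : 0 < ∫ z : EuclideanSpace ℝ (Fin n), g z / ‖z‖ ^ ((n : ℝ) - 2)) :
    ∃ R₀ : ℝ, 3 ≤ R₀ ∧ ∀ y : EuclideanSpace ℝ (Fin n), R₀ ≤ ‖y‖ →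
      ENNReal.ofReal ((∫ z : EuclideanSpace ℝ (Fin n), g z / ‖z‖ ^ ((n : ℝ) - 2)) /
          (2 ^ ((n : ℝ) - 2 * m + 1) * ‖y‖ ^ ((n : ℝ) - 2 * m) * Real.log ‖y‖)) ≤
        ∫⁻ z : EuclideanSpace ℝ (Fin n),
          ENNReal.ofReal (g z / ‖y - z‖ ^ ((n : ℝ) - 2 * m)) := by
  have : Nonempty (Fin n) := ⟨⟨0, by omega⟩⟩
  set C₀ := ∫ z : EuclideanSpace ℝ (Fin n), g z / ‖z‖ ^ ((n : ℝ) - 2)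
  set r : ℝ := (n : ℝ) - 2
  set p : ℝ := (n : ℝ) - 2 * m
  have hr : 0 < r := by simp only [r, sub_pos]; exact_mod_cast (by omega : 2 < n)
  have hp : 0 ≤ p := by simp only [p, sub_nonneg]; exact_mod_cast (by omega : 2 * m ≤ n)
  have hpr : p ≤ r := by simp only [p, r]; gcongr; exact_mod_cast (by omega : 2 ≤ 2 * m)
  obtain ⟨ε, hεC, hε⟩ : ∃ ε, C₀ / 2 ≤ ∫ z in {z | ε ≤ ‖z‖}, g z / ‖z‖ ^ r ∧ 0 < ε :=
    (((tendsto_setIntegral_norm_ge_nhdsGT_zero hint).eventually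
      (eventually_ge_nhds (half_lt_self hpos))).and self_mem_nhdsWithin).exists
  refine ⟨max 3 (exp (ε⁻¹ ^ r)), le_max_left _ _, fun y hy => ?_⟩
  have hy3 : 3 ≤ ‖y‖ := (le_max_left _ _).trans hy
  have hL : 1 ≤ log ‖y‖ := one_le_log_of_three_le hy3
  have hLε : ε⁻¹ ^ r ≤ log ‖y‖ :=
    (le_log_iff_exp_le (by linarith)).mpr ((le_max_right _ _).trans hy)
  set K := log ‖y‖ ^ r⁻¹
  have hKr : K ^ r = log ‖y‖ := rpow_inv_rpow (by linarith) hr.ne'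
  have hK : 1 ≤ K := one_le_rpow hL (inv_nonneg.mpr hr.le)
  have hKε : 1 ≤ K * ε := by
    rw [← inv_le_iff_one_le_mul₀ hε]
    exact (le_rpow_inv_iff_of_pos (by positivity) (by linarith) hr).mpr hLε
  calc ENNReal.ofReal (C₀ / (2 ^ (p + 1) * ‖y‖ ^ p * log ‖y‖))
      = ENNReal.ofReal (C₀ / 2 / (2 ^ p * ‖y‖ ^ p * K ^ r)) := by
        rw [hKr, rpow_add two_pos, rpow_one, div_div]
        ring_nf
    _ ≤ ENNReal.ofReal ((∫ z in {z | ε ≤ ‖z‖}, g z / ‖z‖ ^ r) / (2 ^ p * ‖y‖ ^ p * K ^ r)) := by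
        gcongr
    _ ≤ _ := ofReal_setIntegral_div_le_lintegral_div_norm_sub_rpow hnonneg hp hpr
        (by linarith) hK hKε hint.integrableOn
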